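/- Let C be a Hamiltonian cycle of a graph whose vertex set V is partitioned into q ≥ 2 nonempty parts. Then C contains at least q edges whose endpoints lie in different parts. Consequently, in any Hamiltonian decomposition of K(a^{(q)};λ,μ) with a > 1, each Hamiltonian cycle uses at least q mixed edges, and hence λ ≤ μa(q−1) is necessary for K(a^{(q)};λ,μ) to admit a Hamiltonian decomposition. -/

import Mathlib

/-!
Fix a part `P`. Inside `P` every vertex has degree `2`, so the edges leaving `P` number
`2|P|` minus twice the edges inside `P`: an even number. It is positive because the cycle
is connected and `P` is a proper nonempty subset, hence at least `2`. Summing over the `q`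
parts counts every mixed edge twice, giving at least `q` mixed edges.

In a Hamiltonian decomposition of `K(a^{(q)};λ,μ)` there are `k = ((a-1)λ + (q-1)aμ)/2`
cycles (the degree of one vertex), each with at least `q` mixed edges, while there are
only `qa·(q-1)aμ/2` mixed edges in total; comparing gives `λ ≤ μa(q-1)`.
-/

open Finset

/-- The vertex set of `K(a^{(p)};λ,μ)`: `p` parts, each of size `a`. -/
abbrev KV (p a : ℕ) := Fin p × Fin a

/-- The edge multiplicity function of `K(a^{(p)};λ,μ)`: vertices in the same
part are joined by `lam` edges, vertices in different parts by `mu` edges. -/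
def Kmult (p a lam mu : ℕ) (u v : KV p a) : ℕ :=
  if u = v then 0 else if u.1 = v.1 then lam else mu

/-- The (simple) support graph of a loopless multigraph given by its
multiplicity function `w`. -/
def supp {V : Type} (w : V → V → ℕ) : SimpleGraph V where
  Adj u v := u ≠ v ∧ (0 < w u v ∨ 0 < w v u)
  symm := by
    constructor
    intro u v h
    exact ⟨h.1.symm, h.2.symm⟩
  loopless := by
    constructor
    intro v h
    exact h.1 rfl

/-- The degree of a vertex in a loopless multigraph given by its multiplicity
function. -/
def mdeg {V : Type} [Fintype V] (w : V → V → ℕ) (v : V) : ℕ := ∑ u, w v u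

/-- The number of connected components of the (spanning) subgraph given by the
multiplicity function `w`. -/
noncomputable def numComp {V : Type} (w : V → V → ℕ) : ℕ :=
  Nat.card (supp w).ConnectedComponent

/-- Every component of the multigraph given by `w` is a path (possibly of
length `0`): no multiple edges, no cycles, and all degrees at most `2`. -/
def IsPathForest {V : Type} [Fintype V] (w : V → V → ℕ) : Prop :=
  (∀ u v, w u v ≤ 1) ∧ (supp w).IsAcyclic ∧ (∀ v, mdeg w v ≤ 2)

/-- The loopless multigraph given by `w` is a Hamiltonian cycle of the complete
vertex set `V`: it is connected (and spanning) and every vertex has degree `2`. -/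
def IsHamCycle {V : Type} [Fintype V] (w : V → V → ℕ) : Prop :=
  (supp w).Connected ∧ ∀ v, mdeg w v = 2

/-- `c` is a `k`-edge-coloring of `K(a^{(p)};λ,μ)`, recorded by the (symmetric)
multiplicity functions `c j` of its color classes, which partition the edges. -/
def KColoring (p a lam mu k : ℕ) (c : Fin k → KV p a → KV p a → ℕ) : Prop :=
  (∀ j u v, c j u v = c j v u) ∧ (∀ u v, ∑ j, c j u v = Kmult p a lam mu u v)

/-- The canonical identification of the vertices of `K(a^{(p)};λ,μ)` with the
vertices of the first `p` parts of `K(a^{(p+r)};λ,μ)`. -/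
def KVemb (p a r : ℕ) (x : KV p a) : KV (p + r) a := (Fin.castAdd r x.1, x.2)

/-- The `k`-edge-coloring `c` of `K(a^{(p)};λ,μ)` can be embedded into a
Hamiltonian decomposition of `K(a^{(p+r)};λ,μ)`: the coloring extends to a
`k`-edge-coloring of `K(a^{(p+r)};λ,μ)` all of whose color classes are
Hamiltonian cycles. -/
def EmbedsInHamDecomp (p a lam mu r k : ℕ)
    (c : Fin k → KV p a → KV p a → ℕ) : Prop :=
  ∃ c' : Fin k → KV (p + r) a → KV (p + r) a → ℕ,
    KColoring (p + r) a lam mu k c' ∧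
    (∀ j, IsHamCycle (c' j)) ∧
    (∀ j u v, c' j (KVemb p a r u) (KVemb p a r v) = c j u v)

/-- Twice the number of pure edges of `w` lying inside part `i`. -/
def purePairSum (p a : ℕ) (w : KV p a → KV p a → ℕ) (i : Fin p) : ℕ :=
  ∑ x : Fin a, ∑ y : Fin a, w (i, x) (i, y)

/-- Twice the number of mixed edges of `w` (edges joining different parts). -/
def mixedPairSum (p a : ℕ) (w : KV p a → KV p a → ℕ) : ℕ :=
  ∑ u : KV p a, ∑ v : KV p a, if u.1 ≠ v.1 then w u v else 0

theorem IsHamCycle.even_mdeg {V : Type} [Fintype V] {w : V → V → ℕ} (h : IsHamCycle w)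
    (v : V) : Even (mdeg w v) :=
  (h.2 v).symm ▸ even_two

section Cut

variable {V : Type} [DecidableEq V] {w : V → V → ℕ}

theorem even_sum_sum_of_symm (hsymm : ∀ u v, w u v = w v u) (hdiag : ∀ v, w v v = 0)
    (S : Finset V) : Even (∑ u ∈ S, ∑ v ∈ S, w u v) := by
  induction S using Finset.induction_on with
  | empty => simp
  | insert a S ha ih =>
    have hcol : ∑ u ∈ S, w u a = ∑ v ∈ S, w a v := Finset.sum_congr rfl fun u _ => hsymm u a
    simp only [Finset.sum_insert ha, Finset.sum_add_distrib, hdiag, hcol, zero_add, ← add_assoc]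
    exact Even.add ⟨_, rfl⟩ ih

theorem even_sum_cut [Fintype V] (hsymm : ∀ u v, w u v = w v u) (hdiag : ∀ v, w v v = 0)
    (heven : ∀ v, Even (mdeg w v)) (S : Finset V) :
    Even (∑ u ∈ S, ∑ v ∈ Sᶜ, w u v) := by
  have hdeg : Even (∑ u ∈ S, ∑ v ∈ S, w u v + ∑ u ∈ S, ∑ v ∈ Sᶜ, w u v) := by
    rw [← Finset.sum_add_distrib]
    simp only [Finset.sum_add_sum_compl]
    exact Finset.even_sum _ fun u _ => heven u
  exact (Nat.even_add.mp hdeg).mp (even_sum_sum_of_symm hsymm hdiag S)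

theorem pos_sum_cut [Fintype V] (hsymm : ∀ u v, w u v = w v u) (hconn : (supp w).Connected)
    {S : Finset V} (hS : S.Nonempty) (hSc : Sᶜ.Nonempty) :
    0 < ∑ u ∈ S, ∑ v ∈ Sᶜ, w u v := by
  obtain ⟨x, hx⟩ := hS
  obtain ⟨y, hy⟩ := hSc
  obtain ⟨d, -, hd₁, hd₂⟩ := (hconn.preconnected x y).some.exists_boundary_dart (S : Set V)
    (by simpa using hx) (by simpa using Finset.mem_compl.mp hy)
  have hw : 0 < w d.fst d.snd := d.adj.2.elim id (hsymm d.fst d.snd ▸ ·)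
  refine Finset.sum_pos' (fun _ _ => Nat.zero_le _) ⟨d.fst, hd₁, ?_⟩
  exact Finset.sum_pos' (fun _ _ => Nat.zero_le _) ⟨d.snd, by simpa using hd₂, hw⟩

theorem two_le_sum_cut [Fintype V] (hsymm : ∀ u v, w u v = w v u) (hdiag : ∀ v, w v v = 0)
    (hconn : (supp w).Connected) (heven : ∀ v, Even (mdeg w v))
    {S : Finset V} (hS : S.Nonempty) (hSc : Sᶜ.Nonempty) :
    2 ≤ ∑ u ∈ S, ∑ v ∈ Sᶜ, w u v := by
  obtain ⟨m, hm⟩ := even_sum_cut hsymm hdiag heven S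
  have := pos_sum_cut hsymm hconn hS hSc
  omega

end Cut

theorem two_mul_card_le_sum_cross {V ι : Type} [Fintype V] [Fintype ι] [DecidableEq ι]
    [Nontrivial ι] {f : V → ι} (hf : Function.Surjective f) {w : V → V → ℕ}
    (hsymm : ∀ u v, w u v = w v u) (hdiag : ∀ v, w v v = 0)
    (hconn : (supp w).Connected) (heven : ∀ v, Even (mdeg w v)) :
    2 * Fintype.card ι ≤ ∑ u, ∑ v, if f u ≠ f v then w u v else 0 := by
  classical
  let P (i : ι) : Finset V := {u | f u = i}
  have hcut (i : ι) : 2 ≤ ∑ u ∈ P i, ∑ v ∈ (P i)ᶜ, w u v := by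
    refine two_le_sum_cut hsymm hdiag hconn heven ?_ ?_
    · obtain ⟨u, hu⟩ := hf i
      exact ⟨u, by simp [P, hu]⟩
    · obtain ⟨j, hj⟩ := exists_ne i
      obtain ⟨u, hu⟩ := hf j
      exact ⟨u, by simp [P, hu, hj]⟩
  calc 2 * Fintype.card ι = ∑ _i : ι, 2 := by simp [mul_comm]
    _ ≤ ∑ i, ∑ u ∈ P i, ∑ v ∈ (P i)ᶜ, w u v :=
        Finset.sum_le_sum fun i _ => hcut i
    _ = ∑ i, ∑ u ∈ P i, ∑ v, if f u ≠ f v then w u v else 0 := by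
        refine Finset.sum_congr rfl fun i _ => Finset.sum_congr rfl fun u hu => ?_
        rw [(Finset.mem_filter.mp hu).2, Finset.compl_filter, Finset.sum_filter]
        simp only [ne_comm]
    _ = ∑ u, ∑ v, if f u ≠ f v then w u v else 0 := Finset.sum_fiberwise _ f _

theorem Fintype.sum_ite_eq_add_card_sub_one_mul {α : Type} [Fintype α] [DecidableEq α]
    (b : α) (x y : ℕ) :
    ∑ a : α, (if a = b then x else y) = x + (Fintype.card α - 1) * y := by
  rw [Finset.sum_ite, Finset.filter_eq', Finset.filter_ne', if_pos (Finset.mem_univ b)]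
  simp [Finset.card_erase_of_mem]

section KGraph

variable {q a lam mu k : ℕ}

theorem sum_Kmult (v : KV q a) :
    ∑ u, Kmult q a lam mu v u = (a - 1) * lam + (q - 1) * (a * mu) := by
  have hrow (i : Fin q) : ∑ x : Fin a, Kmult q a lam mu v (i, x) =
      if i = v.1 then (a - 1) * lam else a * mu := by
    by_cases h : i = v.1
    · subst h
      simp [Kmult, Prod.ext_iff, eq_comm (a := v.2), Fintype.sum_ite_eq_add_card_sub_one_mul]
    · simp [Kmult, Prod.ext_iff, h, Ne.symm h]
  rw [Fintype.sum_prod_type]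
  simp only [hrow, Fintype.sum_ite_eq_add_card_sub_one_mul, Fintype.card_fin]

theorem sum_mixed_Kmult (v : KV q a) :
    ∑ u : KV q a, (if v.1 ≠ u.1 then Kmult q a lam mu v u else 0) = (q - 1) * (a * mu) := by
  have hrow (i : Fin q) : ∑ x : Fin a, (if v.1 ≠ i then Kmult q a lam mu v (i, x) else 0) =
      if i = v.1 then 0 else a * mu := by
    by_cases h : i = v.1
    · simp [h]
    · simp [Kmult, Prod.ext_iff, h, Ne.symm h]
  rw [Fintype.sum_prod_type]
  simp only [hrow, Fintype.sum_ite_eq_add_card_sub_one_mul, Fintype.card_fin, zero_add]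

end KGraph

namespace KColoring

variable {q a lam mu k : ℕ} {c : Fin k → KV q a → KV q a → ℕ}

theorem apply_self_eq_zero (hc : KColoring q a lam mu k c) (j : Fin k) (v : KV q a) :
    c j v v = 0 := by
  have h : ∑ j, c j v v = 0 := by simp [hc.2, Kmult]
  exact Finset.sum_eq_zero_iff.mp h j (Finset.mem_univ j)

theorem sum_mdeg (hc : KColoring q a lam mu k c) (v : KV q a) :
    ∑ j, mdeg (c j) v = (a - 1) * lam + (q - 1) * (a * mu) := by
  simp only [mdeg]
  rw [Finset.sum_comm]
  simp only [hc.2, sum_Kmult]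

theorem sum_mixedPairSum (hc : KColoring q a lam mu k c) :
    ∑ j, mixedPairSum q a (c j) = q * a * ((q - 1) * (a * mu)) := by
  have hsplit (u v : KV q a) : ∑ j, (if u.1 ≠ v.1 then c j u v else 0) =
      if u.1 ≠ v.1 then Kmult q a lam mu u v else 0 := by
    split_ifs <;> simp [hc.2]
  calc ∑ j, mixedPairSum q a (c j)
      = ∑ u, ∑ v, ∑ j, (if u.1 ≠ v.1 then c j u v else 0) := by
        simp only [mixedPairSum]
        rw [Finset.sum_comm]
        exact Finset.sum_congr rfl fun u _ => Finset.sum_comm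
    _ = q * a * ((q - 1) * (a * mu)) := by
        simp only [hsplit, sum_mixed_Kmult, Finset.sum_const, Finset.card_univ,
          Fintype.card_prod, Fintype.card_fin, smul_eq_mul]

theorem two_mul_le_mixedPairSum (hc : KColoring q a lam mu k c) (ha : 0 < a) (hq : 2 ≤ q)
    (hham : ∀ j, IsHamCycle (c j)) (j : Fin k) : 2 * q ≤ mixedPairSum q a (c j) := by
  have hsurj : Function.Surjective (Prod.fst : KV q a → Fin q) :=
    fun i => ⟨(i, ⟨0, ha⟩), rfl⟩
  have := Fin.nontrivial_iff_two_le.mpr hq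
  have hcross := two_mul_card_le_sum_cross hsurj (hc.1 j) (hc.apply_self_eq_zero j)
    (hham j).1 (hham j).even_mdeg
  rwa [Fintype.card_fin] at hcross

theorem lam_le (hc : KColoring q a lam mu k c) (ha : 1 < a) (hq : 2 ≤ q)
    (hham : ∀ j, IsHamCycle (c j)) : lam ≤ mu * a * (q - 1) := by
  set M := (q - 1) * (a * mu)
  have hk : 2 * k = (a - 1) * lam + M := by
    rw [← hc.sum_mdeg ((⟨0, by omega⟩, ⟨0, by omega⟩) : KV q a)]
    simp [(hham _).2, mul_comm]
  have hmixed : q * (2 * k) ≤ q * (a * M) := by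
    calc q * (2 * k) = ∑ _j : Fin k, 2 * q := by simp; ring
      _ ≤ ∑ j, mixedPairSum q a (c j) :=
          Finset.sum_le_sum fun j _ => hc.two_mul_le_mixedPairSum (by omega) hq hham j
      _ = q * (a * M) := by rw [hc.sum_mixedPairSum, mul_assoc]
  have hpure : (a - 1) * lam + M ≤ a * M := hk ▸ Nat.le_of_mul_le_mul_left hmixed (by omega)
  have hpure' : (a - 1) * lam ≤ (a - 1) * M := by
    have hsplit : a * M = (a - 1) * M + M := by
      rw [← add_one_mul (a - 1), Nat.sub_add_cancel (by omega)]
    omega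
  calc lam ≤ M := Nat.le_of_mul_le_mul_left hpure' (by omega)
    _ = mu * a * (q - 1) := by ring

end KColoring

/-- A Hamiltonian cycle of a graph whose vertex set is partitioned into `q ≥ 2`
nonempty parts contains at least `q` edges with endpoints in different parts
(counted here as ordered pairs, hence `2q`).  Consequently, in any Hamiltonian
decomposition of `K(a^{(q)};λ,μ)` with `a > 1` each Hamiltonian cycle uses at
least `q` mixed edges, and hence `λ ≤ μa(q−1)` is necessary for
`K(a^{(q)};λ,μ)` to admit a Hamiltonian decomposition. -/
theorem ham_cycle_mixed_edges_bound :
    (∀ (V : Type) [Fintype V] (q : ℕ), 2 ≤ q →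
      ∀ f : V → Fin q, Function.Surjective f →
      ∀ w : V → V → ℕ, (∀ u v, w u v = w v u) → (∀ v, w v v = 0) →
      IsHamCycle w →
      2 * q ≤ ∑ u, ∑ v, if f u ≠ f v then w u v else 0) ∧
    (∀ a q lam mu k : ℕ, 1 < a → 2 ≤ q →
      ∀ c : Fin k → KV q a → KV q a → ℕ,
        KColoring q a lam mu k c → (∀ j, IsHamCycle (c j)) →
        ∀ j, 2 * q ≤ mixedPairSum q a (c j)) ∧
    (∀ a q lam mu k : ℕ, 1 < a → 2 ≤ q →
      (∃ c : Fin k → KV q a → KV q a → ℕ,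
        KColoring q a lam mu k c ∧ ∀ j, IsHamCycle (c j)) →
      lam ≤ mu * a * (q - 1)) := by
  refine ⟨fun V _ q hq f hf w hsymm hdiag hham => ?_,
    fun a q lam mu k ha hq c hc hham j => hc.two_mul_le_mixedPairSum (by omega) hq hham j,
    fun a q lam mu k ha hq ⟨c, hc, hham⟩ => hc.lam_le ha hq hham⟩
  have := Fin.nontrivial_iff_two_le.mpr hq
  simpa using two_mul_card_le_sum_cross hf hsymm hdiag hham.1 hham.even_mdeg
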